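/- arXiv:1211.2906 — 5 statements merged into one kernel-verified Lean document; each statement's English description precedes it below -/
import Mathlib

section
/- Let U ⊆ ℝ \ {0} be open and let f : ℝ → ℝ be C⁵ on U. Define (L₁ f)(x) = f''(x) − (2/x)·f'(x) and (M₁ f)(x) = f'''(x) − (3/x)·f''(x) + (3/x²)·f'(x). Then L₁(M₁ f)(x) = M₁(L₁ f)(x) for every x ∈ U, i.e. the second-order operator L₁ and the third-order operator M₁ commute. -/
/-!
Both operators are scale invariant: they belong to the family
`E_n(c) = ∑ₖ cₖ x^(k-n) Dᵏ` indexed by `n : ℤ` and a polynomial `c = ∑ₖ cₖ Xᵏ`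
(`L₁ = E_2(X² - 2X)`, `M₁ = E_3(X³ - 3X² + 3X)`). On `x ≠ 0`, the product rule gives
`D ∘ E_n(c) = E_{n+1}(X (c + c') - n c)`, and multiplying by `x^(-j)` turns `E_n(c)` into
`E_{n+j}(c)`. Hence both `L₁ (M₁ f)` and `M₁ (L₁ f)` are `E_5(·) f` on `U`, and the theorem
reduces to an identity between two explicit polynomials of degree 5.
-/

/-- The gauge-transformed Calogero–Moser operator `L₁ = d²/dx² − (2/x)·d/dx`. -/
noncomputable def L1 (f : ℝ → ℝ) : ℝ → ℝ :=
  fun x => deriv (deriv f) x - 2 / x * deriv f x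

/-- The third-order operator `M₁ = d³/dx³ − (3/x)·d²/dx² + (3/x²)·d/dx`. -/
noncomputable def M1 (f : ℝ → ℝ) : ℝ → ℝ :=
  fun x => deriv (deriv (deriv f)) x - 3 / x * deriv (deriv f) x
    + 3 / x ^ 2 * deriv f x

open Polynomial Set

theorem ContDiffOn.hasDerivAt_iteratedDeriv {𝕜 F : Type*} [NontriviallyNormedField 𝕜]
    [NormedAddCommGroup F] [NormedSpace 𝕜 F] {f : 𝕜 → F} {U : Set 𝕜} {m k : ℕ}
    (hf : ContDiffOn 𝕜 m f U) (hU : IsOpen U) (hk : k < m) {x : 𝕜} (hx : x ∈ U) :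
    HasDerivAt (iteratedDeriv k f) (iteratedDeriv (k + 1) f x) x := by
  have hd := (hf.differentiableOn_iteratedDerivWithin (mod_cast hk) hU.uniqueDiffOn).congr
    (iteratedDerivWithin_of_isOpen hU).symm
  rw [iteratedDeriv_succ]
  exact (hd.differentiableAt (hU.mem_nhds hx)).hasDerivAt

noncomputable def eulerOp (n : ℤ) (c : ℝ[X]) (f : ℝ → ℝ) : ℝ → ℝ :=
  fun x => c.sum fun k a => a * x ^ ((k : ℤ) - n) * iteratedDeriv k f x

noncomputable def eulerDeriv (n : ℤ) (c : ℝ[X]) : ℝ[X] :=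
  X * (c + derivative c) - C (n : ℝ) * c

noncomputable def L1Coeff (n : ℤ) (c : ℝ[X]) : ℝ[X] :=
  eulerDeriv (n + 1) (eulerDeriv n c) - C 2 * eulerDeriv n c

noncomputable def M1Coeff (n : ℤ) (c : ℝ[X]) : ℝ[X] :=
  eulerDeriv (n + 2) (eulerDeriv (n + 1) (eulerDeriv n c))
    - C 3 * eulerDeriv (n + 1) (eulerDeriv n c) + C 3 * eulerDeriv n c

section EulerOp

variable {n : ℤ} {c d : ℝ[X]} {f : ℝ → ℝ} {x : ℝ}

theorem eulerOp_add : eulerOp n (c + d) f x = eulerOp n c f x + eulerOp n d f x :=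
  sum_add_index _ _ _ (fun _ => by simp) (fun _ _ _ => by ring)

theorem eulerOp_smul (r : ℝ) : eulerOp n (r • c) f x = r * eulerOp n c f x := by
  simp only [eulerOp]
  rw [sum_smul_index _ _ _ fun _ => by simp, sum_def, sum_def, Finset.mul_sum]
  exact Finset.sum_congr rfl fun _ _ => by ring

theorem eulerOp_sub : eulerOp n (c - d) f x = eulerOp n c f x - eulerOp n d f x := by
  rw [sub_eq_add_neg, ← neg_one_smul ℝ d, eulerOp_add, eulerOp_smul]
  ring

theorem eulerOp_monomial (k : ℕ) (a : ℝ) :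
    eulerOp n (monomial k a) f x = a * x ^ ((k : ℤ) - n) * iteratedDeriv k f x :=
  sum_monomial_index _ _ (by simp)

theorem eulerOp_zero_one : eulerOp 0 1 f = f := by
  funext x
  rw [← monomial_zero_one, eulerOp_monomial]
  simp

theorem div_pow_mul_eulerOp {m : ℤ} (hx : x ≠ 0) (a : ℝ) (j : ℕ) (hm : n + j = m) :
    a / x ^ j * eulerOp n c f x = eulerOp m (C a * c) f x := by
  simp only [eulerOp]
  rw [C_mul', sum_smul_index _ _ _ fun _ => by simp, sum_def, sum_def, Finset.mul_sum]
  refine Finset.sum_congr rfl fun k _ => ?_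
  rw [← hm, show (k : ℤ) - (n + j) = k - n - j by ring, zpow_sub₀ hx ((k : ℤ) - n) j, zpow_natCast]
  ring

theorem eulerDeriv_add : eulerDeriv n (c + d) = eulerDeriv n c + eulerDeriv n d := by
  simp only [eulerDeriv, derivative_add]
  ring

theorem eulerDeriv_monomial (k : ℕ) (a : ℝ) :
    eulerDeriv n (monomial k a) = monomial (k + 1) a + monomial k (a * (k - n)) := by
  have hX : X * derivative (monomial k a) = monomial k (a * k) := by
    rcases k with _ | k <;> simp [X_mul_monomial]
  rw [eulerDeriv, mul_add, hX, X_mul_monomial, C_mul_monomial, add_sub_assoc, ← map_sub]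
  congr 2
  ring

theorem eulerOp_eulerDeriv :
    eulerOp (n + 1) (eulerDeriv n c) f x = c.sum fun k a =>
      a * x ^ ((k : ℤ) - n) * iteratedDeriv (k + 1) f x
        + a * ((k : ℝ) - n) * x ^ ((k : ℤ) - n - 1) * iteratedDeriv k f x := by
  induction c using Polynomial.induction_on' with
  | add p q hp hq =>
    rw [eulerDeriv_add, eulerOp_add, hp, hq, sum_add_index _ _ _ (fun _ => by simp)]
    exact fun _ _ _ => by ring
  | monomial k a =>
    rw [eulerDeriv_monomial, eulerOp_add, eulerOp_monomial, eulerOp_monomial,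
      sum_monomial_index _ _ (by simp), show ((k + 1 : ℕ) : ℤ) - (n + 1) = k - n by push_cast; ring,
      show (k : ℤ) - (n + 1) = k - n - 1 by ring]

theorem hasDerivAt_eulerOp (hx : x ≠ 0)
    (hf : ∀ k ≤ c.natDegree, HasDerivAt (iteratedDeriv k f) (iteratedDeriv (k + 1) f x) x) :
    HasDerivAt (eulerOp n c f) (eulerOp (n + 1) (eulerDeriv n c) f x) x := by
  rw [eulerOp_eulerDeriv]
  unfold eulerOp
  simp only [sum_def]
  refine HasDerivAt.fun_sum fun k hk => ?_
  refine (((hasDerivAt_zpow ((k : ℤ) - n) x (.inl hx)).const_mul (c.coeff k)).fun_mul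
    (hf k (le_natDegree_of_mem_supp k hk))).congr_deriv ?_
  push_cast
  ring

end EulerOp

theorem natDegree_eulerDeriv_le (n : ℤ) (c : ℝ[X]) :
    (eulerDeriv n c).natDegree ≤ c.natDegree + 1 := by
  have hX := natDegree_mul_le (p := X) (q := c + derivative c)
  have hsum := natDegree_add_le c (derivative c)
  have hd := natDegree_derivative_le c
  have hC := natDegree_C_mul_le (n : ℝ) c
  have hXdeg := natDegree_X_le (R := ℝ)
  exact (natDegree_sub_le _ _).trans (by omega)

theorem natDegree_L1Coeff_le (n : ℤ) (c : ℝ[X]) : (L1Coeff n c).natDegree ≤ c.natDegree + 2 := by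
  have h1 := natDegree_eulerDeriv_le n c
  have h2 := natDegree_eulerDeriv_le (n + 1) (eulerDeriv n c)
  have h3 := natDegree_C_mul_le 2 (eulerDeriv n c)
  exact (natDegree_sub_le _ _).trans (by omega)

theorem natDegree_M1Coeff_le (n : ℤ) (c : ℝ[X]) : (M1Coeff n c).natDegree ≤ c.natDegree + 3 := by
  have h1 := natDegree_eulerDeriv_le n c
  have h2 := natDegree_eulerDeriv_le (n + 1) (eulerDeriv n c)
  have h3 := natDegree_eulerDeriv_le (n + 2) (eulerDeriv (n + 1) (eulerDeriv n c))
  have h4 := natDegree_C_mul_le 3 (eulerDeriv (n + 1) (eulerDeriv n c))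
  have h5 := natDegree_C_mul_le 3 (eulerDeriv n c)
  have h6 := natDegree_sub_le (eulerDeriv (n + 2) (eulerDeriv (n + 1) (eulerDeriv n c)))
    (C 3 * eulerDeriv (n + 1) (eulerDeriv n c))
  exact (natDegree_add_le _ _).trans (by omega)

section OnOpenSet

variable {U : Set ℝ} {f g : ℝ → ℝ} {m : ℕ} {n : ℤ} {c : ℝ[X]}

theorem eqOn_deriv_eulerOp (hU : IsOpen U) (hU0 : ∀ x ∈ U, x ≠ 0) (hf : ContDiffOn ℝ m f U)
    (hc : c.natDegree < m) :
    EqOn (deriv (eulerOp n c f)) (eulerOp (n + 1) (eulerDeriv n c) f) U := fun x hx =>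
  (hasDerivAt_eulerOp (hU0 x hx) fun _ hk =>
    hf.hasDerivAt_iteratedDeriv hU (hk.trans_lt hc) hx).deriv

theorem eqOn_L1_of_eqOn_eulerOp (hU : IsOpen U) (hU0 : ∀ x ∈ U, x ≠ 0)
    (hf : ContDiffOn ℝ m f U) (hc : c.natDegree + 2 ≤ m) (hg : EqOn g (eulerOp n c f) U) :
    EqOn (L1 g) (eulerOp (n + 2) (L1Coeff n c) f) U := by
  have hδ := natDegree_eulerDeriv_le n c
  have h1 := (hg.deriv hU).trans (eqOn_deriv_eulerOp (n := n) hU hU0 hf (by omega))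
  have h2 := (h1.deriv hU).trans (eqOn_deriv_eulerOp (n := n + 1) hU hU0 hf (by omega))
  intro x hx
  have hdiv := div_pow_mul_eulerOp (n := n + 1) (c := eulerDeriv n c) (f := f) (hU0 x hx) 2 1
    (m := n + 2) (by push_cast; ring)
  rw [pow_one] at hdiv
  rw [L1, h1 hx, h2 hx, hdiv, L1Coeff, eulerOp_sub, show n + 1 + 1 = n + 2 by ring]

theorem eqOn_M1_of_eqOn_eulerOp (hU : IsOpen U) (hU0 : ∀ x ∈ U, x ≠ 0)
    (hf : ContDiffOn ℝ m f U) (hc : c.natDegree + 3 ≤ m) (hg : EqOn g (eulerOp n c f) U) :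
    EqOn (M1 g) (eulerOp (n + 3) (M1Coeff n c) f) U := by
  have hδ := natDegree_eulerDeriv_le n c
  have hδδ := natDegree_eulerDeriv_le (n + 1) (eulerDeriv n c)
  have h1 := (hg.deriv hU).trans (eqOn_deriv_eulerOp (n := n) hU hU0 hf (by omega))
  have h2 := (h1.deriv hU).trans (eqOn_deriv_eulerOp (n := n + 1) hU hU0 hf (by omega))
  have h3 := (h2.deriv hU).trans (eqOn_deriv_eulerOp (n := n + 1 + 1) hU hU0 hf (by omega))
  intro x hx
  have hdiv1 := div_pow_mul_eulerOp (n := n + 1 + 1) (c := eulerDeriv (n + 1) (eulerDeriv n c))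
    (f := f) (hU0 x hx) 3 1 (m := n + 3) (by push_cast; ring)
  have hdiv2 := div_pow_mul_eulerOp (n := n + 1) (c := eulerDeriv n c) (f := f) (hU0 x hx) 3 2
    (m := n + 3) (by push_cast; ring)
  rw [pow_one] at hdiv1
  rw [M1, h1 hx, h2 hx, h3 hx, hdiv1, hdiv2, M1Coeff, eulerOp_add, eulerOp_sub,
    show n + 1 + 1 + 1 = n + 3 by ring, show n + 1 + 1 = n + 2 by ring]

end OnOpenSet

theorem L1Coeff_three_M1Coeff_zero_one : L1Coeff 3 (M1Coeff 0 1) = M1Coeff 2 (L1Coeff 0 1) := by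
  simp only [L1Coeff, M1Coeff, eulerDeriv, C_eq_intCast, C_ofNat, derivative_mul,
    derivative_add, derivative_sub, derivative_X, derivative_one, derivative_intCast,
    derivative_ofNat, derivative_zero]
  ring

/-- The operators `L₁` and `M₁` commute: for `f` of class `C⁵` on an open set
`U ⊆ ℝ \ {0}`, `L₁(M₁ f) = M₁(L₁ f)` on `U`. -/
theorem L1_M1_commute (U : Set ℝ) (hU : IsOpen U) (hU0 : ∀ x ∈ U, x ≠ 0)
    (f : ℝ → ℝ) (hf : ContDiffOn ℝ 5 f U) :
    ∀ x ∈ U, L1 (M1 f) x = M1 (L1 f) x := by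
  have hid : EqOn f (eulerOp 0 1 f) U := fun x _ => by rw [eulerOp_zero_one]
  have hM := eqOn_M1_of_eqOn_eulerOp (m := 5) hU hU0 hf (by simp) hid
  have hL := eqOn_L1_of_eqOn_eulerOp (m := 5) hU hU0 hf (by simp) hid
  have hLM := eqOn_L1_of_eqOn_eulerOp (m := 5) hU hU0 hf
    (by linarith [natDegree_M1Coeff_le 0 1, natDegree_one (R := ℝ)]) hM
  have hML := eqOn_M1_of_eqOn_eulerOp (m := 5) hU hU0 hf
    (by linarith [natDegree_L1Coeff_le 0 1, natDegree_one (R := ℝ)]) hL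
  intro x hx
  rw [hLM hx, hML hx]
  norm_num [L1Coeff_three_M1Coeff_zero_one]
end

section
/- Fix n ≥ 1 and an open set U ⊆ ℝ \ {0}. For a sufficiently smooth function f on U (C^{n+2} suffices) define (Tₙ f)(x) = xⁿ·(D − n/x)(D − (n−1)/x)···(D − 1/x) f (x), where D = d/dx and the factors are composed in the indicated order, and define (Lₙ g)(x) = g''(x) − (2n/x)·g'(x). Then for every x ∈ U: Tₙ(f'')(x) = Lₙ(Tₙ f)(x), i.e. Tₙ∘Δ = Lₙ∘Tₙ where Δ f = f''. -/
/-- The first-order factor `D − k/x`, where `D = d/dx`. -/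
noncomputable def opA (k : ℕ) (f : ℝ → ℝ) : ℝ → ℝ :=
  fun x => deriv f x - (k : ℝ) / x * f x

/-- The composition `(D − n/x)(D − (n−1)/x)···(D − 1/x)`, the innermost factor
`(D − 1/x)` being applied first. -/
noncomputable def chain : ℕ → (ℝ → ℝ) → ℝ → ℝ
  | 0, f => f
  | k + 1, f => opA (k + 1) (chain k f)

/-- The higher intertwining operator `Tₙ = xⁿ(D − n/x)(D − (n−1)/x)···(D − 1/x)`. -/
noncomputable def Tn (n : ℕ) (f : ℝ → ℝ) : ℝ → ℝ :=
  fun x => x ^ n * chain n f x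

/-!
With `S_a g = x g' − (2a+1) g` (`raisingOp`) and `L_a g = g'' − (2a/x) g' = x^{2a} (x^{−2a} g')'`
(`weightedLaplacian`), differentiating `xᵏ · chainₖ f` gives `T_{k+1} = S_k ∘ T_k`, and a direct
computation gives the commutation `S_a ∘ L_a = L_{a+1} ∘ S_a`. Hence, by induction,
`T_{k+1} ∘ Δ = S_k ∘ L_k ∘ T_k = L_{k+1} ∘ S_k ∘ T_k = L_{k+1} ∘ T_{k+1}`.
Since these identities only hold on `U`, each step is transported through functions
that agree on a neighbourhood of the point.
-/
open Filter Topology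

noncomputable def weightedLaplacian (a : ℝ) (g : ℝ → ℝ) : ℝ → ℝ :=
  fun x => deriv (deriv g) x - 2 * a / x * deriv g x

noncomputable def raisingOp (a : ℝ) (g : ℝ → ℝ) : ℝ → ℝ :=
  fun x => x * deriv g x - (2 * a + 1) * g x

lemma weightedLaplacian_congr {a x : ℝ} {g h : ℝ → ℝ} (hgh : g =ᶠ[𝓝 x] h) :
    weightedLaplacian a g x = weightedLaplacian a h x := by
  simp only [weightedLaplacian, hgh.deriv.deriv_eq, hgh.deriv_eq]

lemma raisingOp_congr {a x : ℝ} {g h : ℝ → ℝ} (hgh : g =ᶠ[𝓝 x] h) :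
    raisingOp a g x = raisingOp a h x := by
  simp only [raisingOp, hgh.deriv_eq, hgh.eq_of_nhds]

lemma ContDiffOn.differentiableAt_of_isOpen {𝕜 E F : Type*} [NontriviallyNormedField 𝕜]
    [NormedAddCommGroup E] [NormedSpace 𝕜 E] [NormedAddCommGroup F] [NormedSpace 𝕜 F]
    {U : Set E} {g : E → F} {m : WithTop ℕ∞} (hg : ContDiffOn 𝕜 m g U) (hU : IsOpen U)
    (hm : m ≠ 0) {x : E} (hx : x ∈ U) :
    DifferentiableAt 𝕜 g x :=
  (hg.differentiableOn hm).differentiableAt (hU.mem_nhds hx)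

lemma raisingOp_weightedLaplacian (a : ℝ) {U : Set ℝ} (hU : IsOpen U)
    (hU0 : ∀ x ∈ U, x ≠ 0) {g : ℝ → ℝ} (hg : ContDiffOn ℝ 3 g U) {x : ℝ} (hx : x ∈ U) :
    raisingOp a (weightedLaplacian a g) x = weightedLaplacian (a + 1) (raisingOp a g) x := by
  have hg1 : ContDiffOn ℝ 2 (deriv g) U := hg.deriv_of_isOpen hU (by norm_num)
  have hg2 : ContDiffOn ℝ 1 (deriv (deriv g)) U := hg1.deriv_of_isOpen hU (by norm_num)
  have d0 : ∀ y ∈ U, HasDerivAt g (deriv g y) y := fun y hy =>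
    (hg.differentiableAt_of_isOpen hU (by norm_num) hy).hasDerivAt
  have d1 : ∀ y ∈ U, HasDerivAt (deriv g) (deriv (deriv g) y) y := fun y hy =>
    (hg1.differentiableAt_of_isOpen hU (by norm_num) hy).hasDerivAt
  have d2 : HasDerivAt (deriv (deriv g)) (deriv (deriv (deriv g)) x) x :=
    (hg2.differentiableAt_of_isOpen hU (by norm_num) hx).hasDerivAt
  have hx0 := hU0 x hx
  have dL : HasDerivAt (weightedLaplacian a g)
      (deriv (deriv (deriv g)) x - ((0 * x - 2 * a * 1) / x ^ 2 * deriv g x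
        + 2 * a / x * deriv (deriv g) x)) x :=
    d2.sub (((hasDerivAt_const x (2 * a)).div (hasDerivAt_id' x) hx0).mul (d1 x hx))
  have dS : ∀ y ∈ U, HasDerivAt (raisingOp a g)
      (1 * deriv g y + y * deriv (deriv g) y - (2 * a + 1) * deriv g y) y := fun y hy =>
    ((hasDerivAt_id' y).fun_mul (d1 y hy)).sub ((d0 y hy).const_mul (2 * a + 1))
  have dS' : deriv (raisingOp a g) =ᶠ[𝓝 x]
      fun y => 1 * deriv g y + y * deriv (deriv g) y - (2 * a + 1) * deriv g y :=
    eventually_of_mem (hU.mem_nhds hx) fun y hy => (dS y hy).deriv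
  have dS'' : HasDerivAt
      (fun y => 1 * deriv g y + y * deriv (deriv g) y - (2 * a + 1) * deriv g y)
      (1 * deriv (deriv g) x + (1 * deriv (deriv g) x + x * deriv (deriv (deriv g)) x)
        - (2 * a + 1) * deriv (deriv g) x) x :=
    (((d1 x hx).const_mul 1).add ((hasDerivAt_id' x).fun_mul d2)).sub
      ((d1 x hx).const_mul (2 * a + 1))
  simp only [raisingOp, weightedLaplacian] at dL ⊢
  rw [dL.deriv, dS'.deriv_eq, dS''.deriv, (dS x hx).deriv]
  field_simp
  ring

lemma contDiffOn_chain {U : Set ℝ} (hU : IsOpen U) (hU0 : ∀ x ∈ U, x ≠ 0) (k m : ℕ)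
    {f : ℝ → ℝ} (hf : ContDiffOn ℝ (m + k : ℕ) f U) : ContDiffOn ℝ m (chain k f) U := by
  induction k generalizing m with
  | zero => simpa [chain] using hf
  | succ k ih =>
    have hk : ContDiffOn ℝ (m + 1 : ℕ) (chain k f) U :=
      ih (m + 1) (by rwa [Nat.add_right_comm, Nat.add_assoc])
    exact (hk.deriv_of_isOpen hU (by simp)).sub
      ((contDiffOn_const.div contDiffOn_id hU0).mul (hk.of_le (by simp)))

lemma contDiffOn_Tn {U : Set ℝ} (hU : IsOpen U) (hU0 : ∀ x ∈ U, x ≠ 0) (k m : ℕ)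
    {f : ℝ → ℝ} (hf : ContDiffOn ℝ (m + k : ℕ) f U) : ContDiffOn ℝ m (Tn k f) U :=
  (contDiffOn_id.pow k).mul (contDiffOn_chain hU hU0 k m hf)

lemma Tn_succ_apply (k : ℕ) (f : ℝ → ℝ) {x : ℝ} (hx : x ≠ 0)
    (hd : DifferentiableAt ℝ (chain k f) x) :
    Tn (k + 1) f x = raisingOp k (Tn k f) x := by
  have hT : deriv (Tn k f) x = k * x ^ (k - 1) * chain k f x + x ^ k * deriv (chain k f) x :=
    ((hasDerivAt_pow k x).fun_mul hd.hasDerivAt).deriv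
  simp only [Tn, raisingOp, chain, opA, hT]
  rcases k with _ | k
  · simp [mul_sub, hx]
  · push_cast [Nat.add_sub_cancel]
    field_simp
    ring

lemma Tn_succ_eqOn {U : Set ℝ} (hU : IsOpen U) (hU0 : ∀ x ∈ U, x ≠ 0) (k : ℕ)
    {f : ℝ → ℝ} (hf : ContDiffOn ℝ (k + 1 : ℕ) f U) :
    Set.EqOn (Tn (k + 1) f) (raisingOp k (Tn k f)) U := fun x hx =>
  Tn_succ_apply k f (hU0 x hx)
    ((contDiffOn_chain hU hU0 k 1 (by rwa [Nat.add_comm])).differentiableAt_of_isOpen hU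
      (by simp) hx)

theorem Tn_deriv_deriv_eqOn {U : Set ℝ} (hU : IsOpen U) (hU0 : ∀ x ∈ U, x ≠ 0) (k : ℕ)
    {f : ℝ → ℝ} (hf : ContDiffOn ℝ (k + 2 : ℕ) f U) :
    Set.EqOn (Tn k (deriv (deriv f))) (weightedLaplacian k (Tn k f)) U := by
  induction k generalizing f with
  | zero =>
    have hT0 (g : ℝ → ℝ) : Tn 0 g = g := funext fun y => by simp [Tn, chain]
    simp [Set.EqOn, hT0, weightedLaplacian]
  | succ k ih =>
    intro x hx
    have hf'' : ContDiffOn ℝ (k + 1 : ℕ) (deriv (deriv f)) U :=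
      (hf.deriv_of_isOpen (m := (k + 2 : ℕ)) hU (by norm_cast)).deriv_of_isOpen hU
        (by norm_cast)
    have hnhds := hU.mem_nhds hx
    calc Tn (k + 1) (deriv (deriv f)) x
        = raisingOp k (Tn k (deriv (deriv f))) x := Tn_succ_eqOn hU hU0 k hf'' hx
      _ = raisingOp k (weightedLaplacian k (Tn k f)) x :=
        raisingOp_congr ((ih (hf.of_le (by norm_cast; omega))).eventuallyEq_of_mem hnhds)
      _ = weightedLaplacian (k + 1) (raisingOp k (Tn k f)) x :=
        raisingOp_weightedLaplacian _ hU hU0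
          (contDiffOn_Tn hU hU0 k 3 (hf.of_le (by norm_cast; omega))) hx
      _ = weightedLaplacian (k + 1 : ℕ) (Tn (k + 1) f) x := by
        push_cast
        exact weightedLaplacian_congr ((Tn_succ_eqOn hU hU0 k
          (hf.of_le (by norm_cast; omega))).symm.eventuallyEq_of_mem hnhds)

theorem intertwining_Tn_general (n : ℕ) (U : Set ℝ) (hU : IsOpen U)
    (hU0 : ∀ x ∈ U, x ≠ 0)
    (f : ℝ → ℝ) (hf : ContDiffOn ℝ (n + 2 : ℕ) f U) :
    ∀ x ∈ U,
      Tn n (fun y => deriv (deriv f) y) x =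
        deriv (deriv (Tn n f)) x - 2 * (n : ℝ) / x * deriv (Tn n f) x :=
  Tn_deriv_deriv_eqOn hU hU0 n hf

/-- `Tₙ` intertwines the one-dimensional Laplacian `Δ f = f''` with
`Lₙ g = g'' − (2n/x) g'`: for `f` of class `C^{n+2}` on an open set
`U ⊆ ℝ \ {0}`, `Tₙ(f'') = Lₙ(Tₙ f)` on `U`. -/
theorem intertwining_Tn (n : ℕ) (hn : 1 ≤ n) (U : Set ℝ) (hU : IsOpen U)
    (hU0 : ∀ x ∈ U, x ≠ 0)
    (f : ℝ → ℝ) (hf : ContDiffOn ℝ (n + 2 : ℕ) f U) :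
    ∀ x ∈ U,
      Tn n (fun y => deriv (deriv f) y) x =
        deriv (deriv (Tn n f)) x - 2 * (n : ℝ) / x * deriv (Tn n f) x :=
  intertwining_Tn_general n U hU hU0 f hf
end

section
/- Let d ≥ 3 with d ≠ 4, fix ζ' ∈ ℝ^d with first coordinate ζ₁', and set ρ(ζ) = |ζ − ζ'|. Define G(ζ) = ( ζ₁·ζ₁' − ρ(ζ)²/(d−4) )·ρ(ζ)^{2−d}. Then for every ζ with ζ₁ ≠ 0 and ζ ≠ ζ': ζ₁·ΔG(ζ) = 2·∂G/∂ζ₁(ζ). Equivalently, G satisfies ∇·(ζ₁⁻² ∇G) = 0 away from the point ζ'. -/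
/-- First partial derivative in direction `i` of a scalar function on `ℝ^d`. -/
noncomputable def pd {d : ℕ} (i : Fin d) (f : EuclideanSpace ℝ (Fin d) → ℝ)
    (ζ : EuclideanSpace ℝ (Fin d)) : ℝ :=
  fderiv ℝ f ζ (EuclideanSpace.single i 1)

/-- Laplacian `Δ = Σᵢ ∂²/∂ζᵢ²` of a scalar function on `ℝ^d`. -/
noncomputable def lap {d : ℕ} (f : EuclideanSpace ℝ (Fin d) → ℝ)
    (ζ : EuclideanSpace ℝ (Fin d)) : ℝ :=
  ∑ i : Fin d, pd i (pd i f) ζ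

/-!
Write `ρ = ‖ζ - ζ'‖` and `c = ζ₁'`, so that `G = c ζ₁ ρ^(2-d) - ρ^(4-d)/(d-4)`. Since
`Δ ρ^s = s (s + d - 2) ρ^(s-2)`, the potential `ρ^(2-d)` is harmonic, hence
`Δ(ζ₁ ρ^(2-d)) = 2 ∂₁ ρ^(2-d)`, while `Δ ρ^(4-d) = 2 (4-d) ρ^(2-d)`. Substituting these and
`∂ᵢ ρ^s = s ρ^(s-2) (ζᵢ - ζᵢ')` into `ζ₁ ΔG - 2 ∂₁G`, everything cancels because `c = ζ₁'`.
-/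

open Filter Topology

section NormSubRpow

variable {E : Type*} [NormedAddCommGroup E] [InnerProductSpace ℝ E] {x a : E}

theorem hasFDerivAt_norm_sub_rpow (hx : x ≠ a) (s : ℝ) :
    HasFDerivAt (fun y => ‖y - a‖ ^ s) ((s * ‖x - a‖ ^ (s - 2)) • innerSL ℝ (x - a)) x := by
  have hsq : ‖x - a‖ ^ 2 ≠ 0 := by simp [sub_ne_zero.2 hx]
  convert ((hasFDerivAt_id x).sub_const a).norm_sq.rpow_const (p := s / 2) (Or.inl hsq) using 1
  · funext y
    rw [id, ← Real.rpow_natCast_mul (norm_nonneg _)]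
    ring_nf
  · ext v
    rw [← Real.rpow_natCast_mul (norm_nonneg _)]
    simp only [map_sub, smul_apply, sub_apply, coe_innerSL_apply, smul_eq_mul, id_eq,
      Nat.cast_ofNat, ContinuousLinearMap.comp_id, nsmul_eq_mul]
    ring_nf

theorem contDiffAt_norm_sub_rpow {n : WithTop ℕ∞} (hx : x ≠ a) (s : ℝ) :
    ContDiffAt ℝ n (fun y => ‖y - a‖ ^ s) x :=
  ((contDiffAt_id.sub contDiffAt_const).norm ℝ (sub_ne_zero.2 hx)).rpow_const_of_ne
    (norm_ne_zero_iff.2 (sub_ne_zero.2 hx))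

end NormSubRpow

section PartialDerivatives

variable {d : ℕ} {f g : EuclideanSpace ℝ (Fin d) → ℝ} {x : EuclideanSpace ℝ (Fin d)}
  {i : Fin d}

theorem HasFDerivAt.pd_eq {f' : EuclideanSpace ℝ (Fin d) →L[ℝ] ℝ} (h : HasFDerivAt f f' x) :
    pd i f x = f' (EuclideanSpace.single i 1) := by
  rw [pd, h.fderiv]

theorem Filter.EventuallyEq.pd_eq (h : f =ᶠ[𝓝 x] g) : pd i f x = pd i g x := by
  rw [pd, pd, h.fderiv_eq]

theorem pd_const (c : ℝ) : pd i (fun _ => c) x = 0 := by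
  simp [pd]

theorem pd_coord (j : Fin d) : pd i (fun y => y j) = fun _ => if j = i then 1 else 0 := by
  funext x
  have h : HasFDerivAt (fun y : EuclideanSpace ℝ (Fin d) => y j)
      (EuclideanSpace.proj j : EuclideanSpace ℝ (Fin d) →L[ℝ] ℝ) x :=
    (EuclideanSpace.proj (𝕜 := ℝ) j).hasFDerivAt (x := x)
  rw [h.pd_eq]
  simp [PiLp.single_apply]

theorem pd_const_mul (c : ℝ) : pd i (fun y => c * f y) = fun y => c * pd i f y := by
  funext y
  have : (fun y => c * f y) = c • f := rfl
  rw [pd, this, fderiv_const_smul_field]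
  rfl

theorem pd_add (hf : DifferentiableAt ℝ f x) (hg : DifferentiableAt ℝ g x) :
    pd i (fun y => f y + g y) x = pd i f x + pd i g x := by
  simp [pd, fderiv_fun_add hf hg]

theorem pd_sub (hf : DifferentiableAt ℝ f x) (hg : DifferentiableAt ℝ g x) :
    pd i (fun y => f y - g y) x = pd i f x - pd i g x := by
  simp [pd, fderiv_fun_sub hf hg]

theorem pd_mul (hf : DifferentiableAt ℝ f x) (hg : DifferentiableAt ℝ g x) :
    pd i (fun y => f y * g y) x = f x * pd i g x + g x * pd i f x := by
  simp [pd, fderiv_fun_mul hf hg]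

theorem ContDiffAt.eventually_differentiableAt (hf : ContDiffAt ℝ 2 f x) :
    ∀ᶠ y in 𝓝 x, DifferentiableAt ℝ f y :=
  (hf.eventually (by simp)).mono fun _ hy => hy.differentiableAt (by norm_num)

theorem ContDiffAt.differentiableAt_pd (hf : ContDiffAt ℝ 2 f x) (i : Fin d) :
    DifferentiableAt ℝ (pd i f) x :=
  ((hf.fderiv_right (m := 1) (by norm_num)).clm_apply contDiffAt_const).differentiableAt
    (by norm_num)

theorem lap_const_mul (c : ℝ) : lap (fun y => c * f y) x = c * lap f x := by
  simp only [lap, pd_const_mul, Finset.mul_sum]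

theorem lap_sub (hf : ContDiffAt ℝ 2 f x) (hg : ContDiffAt ℝ 2 g x) :
    lap (fun y => f y - g y) x = lap f x - lap g x := by
  rw [lap, lap, lap, ← Finset.sum_sub_distrib]
  refine Finset.sum_congr rfl fun i _ => ?_
  have hpd : pd i (fun y => f y - g y) =ᶠ[𝓝 x] fun y => pd i f y - pd i g y := by
    filter_upwards [hf.eventually_differentiableAt, hg.eventually_differentiableAt]
      with y hfy hgy using pd_sub hfy hgy
  rw [hpd.pd_eq, pd_sub (hf.differentiableAt_pd i) (hg.differentiableAt_pd i)]

theorem lap_mul (hf : ContDiffAt ℝ 2 f x) (hg : ContDiffAt ℝ 2 g x) :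
    lap (fun y => f y * g y) x =
      f x * lap g x + 2 * ∑ i, pd i f x * pd i g x + g x * lap f x := by
  have hf₁ : DifferentiableAt ℝ f x := hf.differentiableAt (by norm_num)
  have hg₁ : DifferentiableAt ℝ g x := hg.differentiableAt (by norm_num)
  have hpd2 : ∀ i, pd i (pd i fun y => f y * g y) x =
      f x * pd i (pd i g) x + 2 * (pd i f x * pd i g x) + g x * pd i (pd i f) x := by
    intro i
    have hpd : pd i (fun y => f y * g y) =ᶠ[𝓝 x] fun y => f y * pd i g y + g y * pd i f y := by
      filter_upwards [hf.eventually_differentiableAt, hg.eventually_differentiableAt]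
        with y hfy hgy using pd_mul hfy hgy
    rw [hpd.pd_eq, pd_add (f := fun y => f y * pd i g y) (g := fun y => g y * pd i f y)
        (hf₁.mul (hg.differentiableAt_pd i)) (hg₁.mul (hf.differentiableAt_pd i)),
      pd_mul hf₁ (hg.differentiableAt_pd i), pd_mul hg₁ (hf.differentiableAt_pd i)]
    ring
  simp only [lap, hpd2, Finset.sum_add_distrib, Finset.mul_sum]

theorem pd_coord_mul (hf : DifferentiableAt ℝ f x) (i : Fin d) :
    pd i (fun y => y i * f y) x = x i * pd i f x + f x := by
  have hi : DifferentiableAt ℝ (fun y : EuclideanSpace ℝ (Fin d) => y i) x := by fun_prop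
  simp [pd_mul hi hf, pd_coord]

theorem lap_coord_mul (hf : ContDiffAt ℝ 2 f x) (j : Fin d) :
    lap (fun y => y j * f y) x = x j * lap f x + 2 * pd j f x := by
  have hj : ContDiffAt ℝ 2 (fun y : EuclideanSpace ℝ (Fin d) => y j) x := by fun_prop
  rw [lap_mul hj hf]
  simp [lap, pd_coord, pd_const]

end PartialDerivatives

section Radial

variable {d : ℕ} {x a : EuclideanSpace ℝ (Fin d)}

theorem pd_norm_sub_rpow (hx : x ≠ a) (s : ℝ) (i : Fin d) :
    pd i (fun y => ‖y - a‖ ^ s) x = s * ‖x - a‖ ^ (s - 2) * (x i - a i) := by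
  rw [(hasFDerivAt_norm_sub_rpow hx s).pd_eq]
  simp [EuclideanSpace.inner_single_right]

theorem lap_norm_sub_rpow (hx : x ≠ a) (s : ℝ) :
    lap (fun y => ‖y - a‖ ^ s) x = s * (s + d - 2) * ‖x - a‖ ^ (s - 2) := by
  have hr : 0 < ‖x - a‖ := norm_pos_iff.2 (sub_ne_zero.2 hx)
  have hpd2 : ∀ i, pd i (pd i fun y => ‖y - a‖ ^ s) x =
      s * ‖x - a‖ ^ (s - 2) + s * (s - 2) * ‖x - a‖ ^ (s - 2 - 2) * (x i - a i) ^ 2 := by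
    intro i
    have hpd : pd i (fun y => ‖y - a‖ ^ s) =ᶠ[𝓝 x]
        fun y => s * ‖y - a‖ ^ (s - 2) * (y i - a i) :=
      (eventually_ne_nhds hx).mono fun y hy => pd_norm_sub_rpow hy s i
    have hcoord : DifferentiableAt ℝ (fun y : EuclideanSpace ℝ (Fin d) => y i) x := by fun_prop
    rw [hpd.pd_eq, pd_mul (f := fun y => s * ‖y - a‖ ^ (s - 2)) (g := fun y => y i - a i)
        (((contDiffAt_norm_sub_rpow (n := 1) hx _).differentiableAt one_ne_zero).const_mul s)
        (hcoord.sub_const _),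
      pd_sub hcoord (differentiableAt_const _), pd_const_mul, pd_coord, pd_const]
    simp only [pd_norm_sub_rpow hx, if_true]
    ring
  have hnorm : ∑ i, (x i - a i) ^ 2 = ‖x - a‖ ^ 2 := by
    simp [EuclideanSpace.real_norm_sq_eq]
  have hpow : ‖x - a‖ ^ (s - 2 - 2) * ‖x - a‖ ^ 2 = ‖x - a‖ ^ (s - 2) := by
    rw [Real.rpow_sub hr, Real.rpow_two]
    field_simp
  simp only [lap, hpd2, Finset.sum_add_distrib, ← Finset.mul_sum, hnorm, Finset.sum_const,
    Finset.card_univ, Fintype.card_fin, nsmul_eq_mul]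
  rw [mul_assoc (s * (s - 2)), hpow]
  ring

theorem lap_norm_sub_rpow_two_sub_dim (hx : x ≠ a) :
    lap (fun y => ‖y - a‖ ^ ((2 : ℝ) - d)) x = 0 := by
  simp [lap_norm_sub_rpow hx]

end Radial

/-- The fundamental solution `G(ζ) = (ζ₁ζ₁' − ρ²/(d−4))·ρ^{2−d}` of the elliptic
operator `ℒ = ∇·(ζ₁⁻² ∇·)` satisfies `ζ₁·ΔG = 2·∂₁G` (equivalently
`∇·(ζ₁⁻² ∇G) = 0`) away from its singular point `ζ'` (for `d ≥ 3`, `d ≠ 4`). -/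
theorem G_is_L_harmonic (d : ℕ) (hd : 3 ≤ d) (hd4 : d ≠ 4)
    (ζ' : EuclideanSpace ℝ (Fin d))
    (G : EuclideanSpace ℝ (Fin d) → ℝ)
    (hG : ∀ η, G η =
      (η (⟨0, by omega⟩ : Fin d) * ζ' (⟨0, by omega⟩ : Fin d) -
          dist η ζ' ^ 2 / ((d : ℝ) - 4)) * dist η ζ' ^ ((2 : ℝ) - d)) :
    ∀ ζ : EuclideanSpace ℝ (Fin d),
      ζ (⟨0, by omega⟩ : Fin d) ≠ 0 → ζ ≠ ζ' →
        ζ (⟨0, by omega⟩ : Fin d) * lap G ζ =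
          2 * pd (⟨0, by omega⟩ : Fin d) G ζ := by
  intro ζ _ hne
  set i₀ : Fin d := ⟨0, by omega⟩
  have hm : (d : ℝ) - 4 ≠ 0 := sub_ne_zero.2 (by exact_mod_cast hd4)
  have hexp : (4 : ℝ) - d = 2 + (2 - d) := by ring
  -- `rpow_add'` needs the exponent `4 - d` to be nonzero: at `η = ζ'` we have `0 ^ 0 = 1`.
  have hG' : G = fun η => ζ' i₀ * (η i₀ * ‖η - ζ'‖ ^ ((2 : ℝ) - d)) -
      ((d : ℝ) - 4)⁻¹ * ‖η - ζ'‖ ^ ((4 : ℝ) - d) := by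
    funext η
    rw [hG, dist_eq_norm, hexp,
      Real.rpow_add' (norm_nonneg _) (by rw [← hexp]; contrapose! hm; linarith), Real.rpow_two]
    ring
  have hφ : ∀ s : ℝ, ContDiffAt ℝ 2 (fun η => ‖η - ζ'‖ ^ s) ζ :=
    contDiffAt_norm_sub_rpow hne
  have hcoord : ContDiffAt ℝ 2 (fun η : EuclideanSpace ℝ (Fin d) => η i₀) ζ := by fun_prop
  have hA := contDiffAt_const (c := ζ' i₀) |>.mul (hcoord.mul (hφ ((2 : ℝ) - d)))
  have hB := contDiffAt_const (c := ((d : ℝ) - 4)⁻¹) |>.mul (hφ ((4 : ℝ) - d))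
  have hlap : lap G ζ = ζ' i₀ * (2 * pd i₀ (fun η => ‖η - ζ'‖ ^ ((2 : ℝ) - d)) ζ) -
      ((d : ℝ) - 4)⁻¹ * lap (fun η => ‖η - ζ'‖ ^ ((4 : ℝ) - d)) ζ := by
    rw [hG', lap_sub hA hB, lap_const_mul, lap_const_mul, lap_coord_mul (hφ _),
      lap_norm_sub_rpow_two_sub_dim hne]
    ring
  have hpd : pd i₀ G ζ = ζ' i₀ * (ζ i₀ * pd i₀ (fun η => ‖η - ζ'‖ ^ ((2 : ℝ) - d)) ζ +
        ‖ζ - ζ'‖ ^ ((2 : ℝ) - d)) -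
      ((d : ℝ) - 4)⁻¹ * pd i₀ (fun η => ‖η - ζ'‖ ^ ((4 : ℝ) - d)) ζ := by
    rw [hG', pd_sub (hA.differentiableAt (by norm_num)) (hB.differentiableAt (by norm_num))]
    simp only [pd_const_mul, pd_coord_mul ((hφ _).differentiableAt (by norm_num))]
  rw [hlap, hpd, lap_norm_sub_rpow hne, pd_norm_sub_rpow hne, pd_norm_sub_rpow hne,
    show (4 : ℝ) - d - 2 = 2 - d by ring]
  field_simp
  ring
end

section
/- Let ψ₁, ψ₂, ψ₃, … be a sequence of real polynomials in one variable x with ψ₁(x) = x and ψ_{i+1}'' = ψᵢ for all i ≥ 1 (each ψ_{i+1} is any second antiderivative of ψᵢ, so two integration constants are chosen at each step, one of which is the nontrivial parameter). Define p₀ = 1 and, for n ≥ 1, pₙ = W[ψ₁, …, ψₙ], the Wronskian determinant det( ψⱼ^{(i−1)} )_{1 ≤ i,j ≤ n}. Then for every n ≥ 0 the Burchnall–Chaundy bilinear recurrence holds identically: pₙ(x)·p_{n+1}''(x) − 2·pₙ'(x)·p_{n+1}'(x) + p_{n+1}(x)·pₙ''(x) = 0. -/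
/-!
Write `Θₙ(f) = W[ψ₁, …, ψₙ, f]`, so that `pₙ₊₁ = Θₙ(ψₙ₊₁)`. The Crum–Darboux intertwining
relation `D_x²(pₙ · Θₙ(f)) = pₙ Θₙ(f'')` (Hirota derivative) holds for every `f`; at
`f = ψₙ₊₁` the right-hand side is `pₙ Θₙ(ψₙ)`, a Wronskian with a repeated column, so it
vanishes, which is the recurrence. The relation is proved by induction on `n`: Jacobi's
identity `pₙ Θₙ₊₁(f) = W(pₙ₊₁, Θₙ(f))` expresses level `n + 1` through level `n`, and the
Darboux transformation then carries the relation up one level. The Wronskians `pₙ` that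
must be cancelled along the way are nonzero because `ψⱼ` has degree `2j - 1`, and a
Wronskian of polynomials of distinct degrees has a nonzero coefficient given by a
Vandermonde determinant.
-/

open Polynomial

namespace Polynomial

variable {R : Type*} [CommRing R]

noncomputable def wronskianMatrix {n : ℕ} (f : Fin n → R[X]) : Matrix (Fin n) (Fin n) R[X] :=
  Matrix.of fun i j => derivative^[i] (f j)

@[simp]
theorem wronskianMatrix_apply {n : ℕ} (f : Fin n → R[X]) (i j : Fin n) :
    wronskianMatrix f i j = derivative^[i] (f j) :=
  rfl

theorem exists_det_wronskianMatrix_snoc_eq_sum {n : ℕ} (f : Fin n → R[X]) :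
    ∃ c : ℕ → R[X], c n = (wronskianMatrix f).det ∧ ∀ g,
      (wronskianMatrix (Fin.snoc f g : Fin (n + 1) → R[X])).det =
        ∑ i ∈ Finset.range (n + 1), c i * derivative^[i] g := by
  let minor (i : Fin (n + 1)) : R[X] :=
    (Matrix.of fun r k : Fin n => derivative^[i.succAbove r] (f k)).det
  refine ⟨fun i => if h : i < n + 1 then (-1) ^ (i + n) * minor ⟨i, h⟩ else 0, ?_, fun g => ?_⟩
  · change (if h : n < n + 1 then _ else 0) = _
    rw [dif_pos n.lt_add_one]
    change (-1) ^ (n + n) * minor (Fin.last n) = _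
    simp [minor, wronskianMatrix, ← two_mul]
  · rw [Matrix.det_succ_column _ (Fin.last n), Finset.sum_range]
    refine Finset.sum_congr rfl fun i _ => ?_
    have hminor : (wronskianMatrix (Fin.snoc f g : Fin (n + 1) → R[X])).submatrix i.succAbove
        (Fin.last n).succAbove = Matrix.of fun r k => derivative^[i.succAbove r] (f k) := by
      ext
      simp [wronskianMatrix]
    rw [hminor]
    simp [minor, wronskianMatrix, i.is_le]
    ring

theorem det_wronskianMatrix_snoc_self {n : ℕ} (f : Fin n → R[X]) (j : Fin n) :
    (wronskianMatrix (Fin.snoc f (f j) : Fin (n + 1) → R[X])).det = 0 :=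
  Matrix.det_zero_of_column_eq (Fin.castSucc_lt_last j).ne fun k => by
    simp [wronskianMatrix]

theorem eq_zero_of_forall_sum_mul_iterate_derivative_eq_zero [IsDomain R] {m : ℕ}
    (f : Fin m → R[X]) (hf : (wronskianMatrix f).det ≠ 0) (c : ℕ → R[X])
    (hc : ∀ j, ∑ i ∈ Finset.range m, c i * derivative^[i] (f j) = 0) {i : ℕ} (hi : i < m) :
    c i = 0 := by
  have hv : (fun i : Fin m => c i) = 0 := by
    refine Matrix.eq_zero_of_vecMul_eq_zero hf ?_
    funext j
    simpa [Matrix.vecMul, dotProduct, wronskianMatrix, Finset.sum_range] using hc j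
  exact congrFun hv ⟨i, hi⟩

/- Both sides are differential operators in `h` of order `n + 1` with the same leading
coefficient that annihilate `f` and `g`; their difference has order at most `n` and
annihilates `n + 1` functions with nonzero Wronskian, so it is zero. -/
theorem det_mul_det_wronskianMatrix_snoc_snoc [IsDomain R] {n : ℕ} (f : Fin n → R[X])
    (g h : R[X]) (hg : (wronskianMatrix (Fin.snoc f g : Fin (n + 1) → R[X])).det ≠ 0) :
    (wronskianMatrix f).det *
        (wronskianMatrix (Fin.snoc (Fin.snoc f g) h : Fin (n + 2) → R[X])).det =
      wronskian (wronskianMatrix (Fin.snoc f g : Fin (n + 1) → R[X])).det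
        (wronskianMatrix (Fin.snoc f h : Fin (n + 1) → R[X])).det := by
  set P := (wronskianMatrix f).det
  set Q := (wronskianMatrix (Fin.snoc f g : Fin (n + 1) → R[X])).det
  obtain ⟨c, hcn, hc⟩ := exists_det_wronskianMatrix_snoc_eq_sum f
  obtain ⟨d, hdn, hd⟩ :=
    exists_det_wronskianMatrix_snoc_eq_sum (Fin.snoc f g : Fin (n + 1) → R[X])
  let e (i : ℕ) : R[X] := P * d i - (Q * derivative (c i) - derivative Q * c i) -
    Q * if i = 0 then 0 else c (i - 1)
  have expand (h : R[X]) :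
      P * (wronskianMatrix (Fin.snoc (Fin.snoc f g) h : Fin (n + 2) → R[X])).det -
        wronskian Q (wronskianMatrix (Fin.snoc f h : Fin (n + 1) → R[X])).det =
      ∑ i ∈ Finset.range (n + 1), e i * derivative^[i] h := by
    have hshift :
        ∑ i ∈ Finset.range (n + 1), (if i = 0 then 0 else c (i - 1)) * derivative^[i] h =
          ∑ i ∈ Finset.range n, c i * derivative^[i + 1] h := by
      simp [Finset.sum_range_succ']
    simp only [e, sub_mul, mul_assoc, Finset.sum_sub_distrib, ← Finset.mul_sum, hshift]
    rw [hd, hc, Finset.sum_range_succ, hdn, wronskian, derivative_sum]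
    simp only [derivative_mul, ← Function.iterate_succ_apply' derivative, Finset.sum_add_distrib,
      Finset.sum_range_succ (fun i => c i * derivative^[i + 1] h), hcn]
    ring
  have he (i : ℕ) (hi : i < n + 1) : e i = 0 := by
    refine eq_zero_of_forall_sum_mul_iterate_derivative_eq_zero _ hg e (fun j => ?_) hi
    rw [← expand, det_wronskianMatrix_snoc_self, mul_zero, zero_sub, neg_eq_zero]
    induction j using Fin.lastCases with
    | last => simp only [Fin.snoc_last, Q, wronskian_self_eq_zero]
    | cast k => simp only [Fin.snoc_castSucc, det_wronskianMatrix_snoc_self, wronskian_zero_right]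
  rw [← sub_eq_zero, expand]
  exact Finset.sum_eq_zero fun i hi => by rw [he i (Finset.mem_range.mp hi), zero_mul]

theorem coeff_prod_sum_of_natDegree_le {S ι : Type*} [CommSemiring S] (s : Finset ι)
    (f : ι → S[X]) (d : ι → ℕ) (h : ∀ i ∈ s, (f i).natDegree ≤ d i) :
    (∏ i ∈ s, f i).coeff (∑ i ∈ s, d i) = ∏ i ∈ s, (f i).coeff (d i) := by
  classical
  induction s using Finset.induction_on with
  | empty => simp
  | insert a s ha ih =>
    have hs (i : ι) (hi : i ∈ s) : (f i).natDegree ≤ d i := h i (Finset.mem_insert_of_mem hi)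
    rw [Finset.prod_insert ha, Finset.sum_insert ha, Finset.prod_insert ha,
      coeff_mul_add_eq_of_natDegree_le (h a (Finset.mem_insert_self a s))
        ((natDegree_prod_le _ _).trans (Finset.sum_le_sum hs)), ih hs]

theorem coeff_det_wronskianMatrix {n : ℕ} (f : Fin n → R[X]) (d : Fin n → ℕ)
    (hd : ∀ j, (f j).natDegree ≤ d j) :
    (wronskianMatrix f).det.coeff (∑ j, d j - ∑ i : Fin n, (i : ℕ)) =
      (Matrix.of fun i j : Fin n => (f j).coeff (d j) * ((d j).descFactorial i : R)).det := by
  rw [Matrix.det_apply, Matrix.det_apply, finsetSum_coeff]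
  refine Finset.sum_congr rfl fun σ _ => ?_
  simp only [wronskianMatrix_apply, Matrix.of_apply]
  rw [coeff_smul]
  congr 1
  by_cases hσ : ∀ j, (σ j : ℕ) ≤ d j
  · have hsum : ∑ j, d j - ∑ i : Fin n, (i : ℕ) = ∑ j, (d j - σ j) := by
      have hperm : ∑ j, (σ j : ℕ) = ∑ i : Fin n, (i : ℕ) := Equiv.sum_comp σ _
      have hsplit : ∑ j, (d j - σ j) + ∑ j, (σ j : ℕ) = ∑ j, d j := by
        rw [← Finset.sum_add_distrib]
        exact Finset.sum_congr rfl fun j _ => Nat.sub_add_cancel (hσ j)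
      omega
    rw [hsum, coeff_prod_sum_of_natDegree_le _ _ _ fun j _ =>
      (natDegree_iterate_derivative _ _).trans (Nat.sub_le_sub_right (hd j) _)]
    refine Finset.prod_congr rfl fun j _ => ?_
    simp [coeff_iterate_derivative, Nat.sub_add_cancel (hσ j), mul_comm]
  · push Not at hσ
    obtain ⟨j, hj⟩ := hσ
    rw [Finset.prod_eq_zero (Finset.mem_univ j), Finset.prod_eq_zero (Finset.mem_univ j),
      coeff_zero]
    · rw [Nat.descFactorial_eq_zero_iff_lt.mpr hj, Nat.cast_zero, mul_zero]
    · exact iterate_derivative_eq_zero ((hd j).trans_lt hj)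

theorem det_wronskianMatrix_ne_zero [IsDomain R] [CharZero R] {n : ℕ} (f : Fin n → R[X])
    (hf : ∀ j, f j ≠ 0) (hdeg : Function.Injective fun j => (f j).natDegree) :
    (wronskianMatrix f).det ≠ 0 := by
  set A := Matrix.of fun i j : Fin n => (((f j).natDegree.descFactorial i : ℕ) : R)
  have hvdm : A.det ≠ 0 := by
    have htrans : A.transpose =
        Matrix.of fun i j : Fin n => (descPochhammer R j).eval ((f i).natDegree : R) := by
      ext
      simp [A, descPochhammer_eval_eq_descFactorial]
    rw [← Matrix.det_transpose, htrans, ← Matrix.det_eval_matrixOfPolynomials_eq_det_vandermonde _ _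
      (fun j => descPochhammer_natDegree R j) (fun j => monic_descPochhammer R j)]
    exact Matrix.det_vandermonde_ne_zero_iff.mpr (Nat.cast_injective.comp hdeg)
  intro h0
  have hcoeff := coeff_det_wronskianMatrix f (fun j => (f j).natDegree) fun j => le_rfl
  have hrow := Matrix.det_mul_row (fun j => (f j).coeff (f j).natDegree) A
  simp only [A, Matrix.of_apply] at hrow
  rw [h0, coeff_zero, hrow] at hcoeff
  exact mul_ne_zero (Finset.prod_ne_zero_iff.mpr fun j _ => by simpa using hf j) hvdm hcoeff.symm

noncomputable def hirotaD2 (a b : R[X]) : R[X] :=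
  a * derivative (derivative b) - 2 * derivative a * derivative b + b * derivative (derivative a)

theorem hirotaD2_of_mul_eq_wronskian [IsDomain R] {P Q A B A₁ B₁ : R[X]} (hP : P ≠ 0)
    (hS : hirotaD2 P A = P * B) (hT : hirotaD2 P Q = 0)
    (hA : P * A₁ = wronskian Q A) (hB : P * B₁ = wronskian Q B) :
    hirotaD2 Q A₁ = Q * B₁ := by
  unfold hirotaD2 at *
  unfold wronskian at hA hB
  have hA' := congrArg derivative hA
  have hA'' := congrArg derivative hA'
  have hS' := congrArg derivative hS
  have hT' := congrArg derivative hT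
  simp only [derivative_mul, derivative_sub, derivative_add, derivative_ofNat, zero_mul,
    zero_add, derivative_zero] at hA' hA'' hS' hT'
  -- Substituting `A₁ = W(Q, A) / P` and `B = hirotaD2 P A / P` leaves
  -- `A · ((P' Q + P Q') T - P Q T')`, where `T = hirotaD2 P Q`.
  refine mul_left_cancel₀ (pow_ne_zero 3 hP) ?_
  linear_combination Q * P ^ 2 * hA'' - 2 * P * (Q * derivative P + derivative Q * P) * hA'
    + (derivative (derivative Q) * P ^ 2 - Q * P * derivative (derivative P)
      + 2 * Q * derivative P ^ 2 + 2 * derivative Q * P * derivative P) * hA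
    - Q * P ^ 2 * hB + Q ^ 2 * P * hS' - (Q ^ 2 * derivative P + Q * derivative Q * P) * hS
    - P * Q * A * hT' + (derivative P * Q + P * derivative Q) * A * hT

end Polynomial

namespace AdlerMoser

variable {R : Type*} [CommRing R] (ψ : ℕ → R[X])

noncomputable def tau (n : ℕ) : R[X] :=
  (wronskianMatrix fun j : Fin n => ψ (j + 1)).det

noncomputable def tauAppend (n : ℕ) (f : R[X]) : R[X] :=
  (wronskianMatrix (Fin.snoc (fun j : Fin n => ψ (j + 1)) f : Fin (n + 1) → R[X])).det

theorem tau_zero : tau ψ 0 = 1 :=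
  Matrix.det_fin_zero

theorem tauAppend_zero (f : R[X]) : tauAppend ψ 0 f = f := by
  simpa [tauAppend, Matrix.det_unique] using
    Fin.snoc_last (α := fun _ => R[X]) f fun j : Fin 0 => ψ (j + 1)

theorem snoc_psi (n : ℕ) :
    (Fin.snoc (fun j : Fin n => ψ (j + 1)) (ψ (n + 1)) : Fin (n + 1) → R[X]) =
      fun j : Fin (n + 1) => ψ (j + 1) := by
  funext j
  induction j using Fin.lastCases <;> simp

theorem tauAppend_psi_succ (n : ℕ) : tauAppend ψ n (ψ (n + 1)) = tau ψ (n + 1) := by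
  rw [tauAppend, snoc_psi, tau]

theorem mul_tauAppend_succ [IsDomain R] {n : ℕ} (hτ : tau ψ (n + 1) ≠ 0) (f : R[X]) :
    tau ψ n * tauAppend ψ (n + 1) f = wronskian (tau ψ (n + 1)) (tauAppend ψ n f) := by
  have h := det_mul_det_wronskianMatrix_snoc_snoc (fun j : Fin n => ψ (j + 1)) (ψ (n + 1)) f
    (by rw [snoc_psi]; exact hτ)
  rw [snoc_psi] at h
  exact h

variable {ψ}

theorem natDegree_psi [IsDomain R] [CharZero R] (hψ1 : ψ 1 = X)
    (hψ : ∀ i ≥ 1, derivative (derivative (ψ (i + 1))) = ψ i) (j : ℕ) :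
    (ψ (j + 1)).natDegree = 2 * j + 1 := by
  induction j with
  | zero => simp [hψ1]
  | succ j ih =>
    have h := congrArg natDegree (hψ (j + 1) (by omega))
    rw [natDegree_derivative, natDegree_derivative, ih] at h
    omega

theorem tau_ne_zero [IsDomain R] [CharZero R] (hψ1 : ψ 1 = X)
    (hψ : ∀ i ≥ 1, derivative (derivative (ψ (i + 1))) = ψ i) (n : ℕ) : tau ψ n ≠ 0 := by
  refine det_wronskianMatrix_ne_zero _ (fun j h0 => ?_) fun i j hij => ?_
  · simpa [h0] using natDegree_psi hψ1 hψ j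
  · simp only [natDegree_psi hψ1 hψ] at hij
    omega

theorem tauAppend_derivative_derivative_psi_succ (hψ1 : ψ 1 = X)
    (hψ : ∀ i ≥ 1, derivative (derivative (ψ (i + 1))) = ψ i) (n : ℕ) :
    tauAppend ψ n (derivative (derivative (ψ (n + 1)))) = 0 := by
  cases n with
  | zero => simp [tauAppend_zero, hψ1]
  | succ n =>
    rw [hψ (n + 1) n.succ_pos]
    exact det_wronskianMatrix_snoc_self (fun j : Fin (n + 1) => ψ (j + 1)) (Fin.last n)

theorem hirotaD2_tau_tauAppend [IsDomain R] [CharZero R] (hψ1 : ψ 1 = X)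
    (hψ : ∀ i ≥ 1, derivative (derivative (ψ (i + 1))) = ψ i) (n : ℕ) (f : R[X]) :
    hirotaD2 (tau ψ n) (tauAppend ψ n f) =
      tau ψ n * tauAppend ψ n (derivative (derivative f)) := by
  induction n generalizing f with
  | zero => simp [hirotaD2, tau_zero, tauAppend_zero]
  | succ n ih =>
    have hT : hirotaD2 (tau ψ n) (tau ψ (n + 1)) = 0 := by
      rw [← tauAppend_psi_succ, ih, tauAppend_derivative_derivative_psi_succ hψ1 hψ, mul_zero]
    have hτ := tau_ne_zero hψ1 hψ (n + 1)
    exact hirotaD2_of_mul_eq_wronskian (tau_ne_zero hψ1 hψ n) (ih f) hT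
      (mul_tauAppend_succ ψ hτ f) (mul_tauAppend_succ ψ hτ _)

theorem hirotaD2_tau_tau_succ [IsDomain R] [CharZero R] (hψ1 : ψ 1 = X)
    (hψ : ∀ i ≥ 1, derivative (derivative (ψ (i + 1))) = ψ i) (n : ℕ) :
    hirotaD2 (tau ψ n) (tau ψ (n + 1)) = 0 := by
  rw [← tauAppend_psi_succ, hirotaD2_tau_tauAppend hψ1 hψ,
    tauAppend_derivative_derivative_psi_succ hψ1 hψ, mul_zero]

end AdlerMoser

open AdlerMoser in
/-- Burchnall–Chaundy recurrence for the Adler–Moser polynomials: if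
`ψ₁ = x`, `ψ_{i+1}'' = ψᵢ` (any second antiderivatives, with arbitrary
integration constants), and `p₀ = 1`, `pₙ = W[ψ₁, …, ψₙ]` is the Wronskian
`det(ψⱼ^{(i−1)})_{1 ≤ i,j ≤ n}`, then
`pₙ p_{n+1}'' − 2 pₙ' p_{n+1}' + p_{n+1} pₙ'' = 0` for every `n ≥ 0`. -/
theorem burchnall_chaundy (ψ : ℕ → Polynomial ℝ)
    (hψ1 : ψ 1 = X)
    (hψ : ∀ i ≥ 1, derivative (derivative (ψ (i + 1))) = ψ i)
    (p : ℕ → Polynomial ℝ)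
    (hp0 : p 0 = 1)
    (hp : ∀ n ≥ 1, p n = Matrix.det (Matrix.of fun i j : Fin n =>
      (fun q => derivative q)^[(i : ℕ)] (ψ ((j : ℕ) + 1))))
    (n : ℕ) :
    p n * derivative (derivative (p (n + 1)))
      - 2 * derivative (p n) * derivative (p (n + 1))
      + p (n + 1) * derivative (derivative (p n)) = 0 := by
  have hp_tau : ∀ m, p m = tau ψ m
    | 0 => hp0.trans (tau_zero ψ).symm
    | m + 1 => hp (m + 1) m.succ_pos
  rw [hp_tau n, hp_tau (n + 1)]
  exact hirotaD2_tau_tau_succ hψ1 hψ n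
end

section
/- Fix n ≥ 1 and an open set U ⊆ ℝ \ {0}. On smooth real functions on U define the Schrödinger operator H g = g'' − n(n+1)·g/x², and define recursively the operators 𝒯₀ f = xⁿ·f and 𝒯_{i+1} f = 𝒯ᵢ(f'') − H(𝒯ᵢ f). Then the recursion truncates at step n+1: 𝒯_{n+1} f = 0 for every smooth f on U. In particular H∘𝒯ₙ = 𝒯ₙ∘Δ (with Δ f = f''), so 𝒯ₙ is an intertwining operator between Δ and H. -/
/-- The Schrödinger operator `H g = g'' − n(n+1)·g/x²`. -/
noncomputable def Hop (n : ℕ) (g : ℝ → ℝ) (x : ℝ) : ℝ :=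
  deriv (deriv g) x - (n : ℝ) * ((n : ℝ) + 1) * g x / x ^ 2

/-- The Hadamard recursion `𝒯₀ f = xⁿ·f`, `𝒯_{i+1} f = 𝒯ᵢ(f'') − H(𝒯ᵢ f)`. -/
noncomputable def THad (n : ℕ) : ℕ → (ℝ → ℝ) → ℝ → ℝ
  | 0, f, x => x ^ n * f x
  | i + 1, f, x => THad n i (fun y => deriv (deriv f) y) x - Hop n (THad n i f) x

open Finset Filter

noncomputable def cHad (n i k : ℕ) : ℝ :=
  if k ≤ i then
    (-2 : ℝ) ^ k * (Nat.factorial (2 * i - k)) / (Nat.factorial (i - k) * Nat.factorial k)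
      * ∏ j ∈ Finset.range i, ((n : ℝ) - j)
  else 0

lemma cHad_zero (n : ℕ) : cHad n 0 0 = 1 := by simp [cHad]

lemma cHad_of_gt (n : ℕ) {i k : ℕ} (h : i < k) : cHad n i k = 0 := by
  simp [cHad, Nat.not_le.mpr h]

lemma cHad_truncate (n k : ℕ) : cHad n (n + 1) k = 0 := by
  unfold cHad
  split
  · rw [Finset.prod_eq_zero (Finset.self_mem_range_succ n) (by simp), mul_zero]
  · rfl

lemma cHad_rec_zero (n i : ℕ) :
    cHad n (i+1) 0 = ((n:ℝ)*((n:ℝ)+1) - ((n:ℝ)-2*i)*(((n:ℝ)-2*i)-1)) * cHad n i 0 := by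
  unfold cHad
  rw [if_pos (Nat.zero_le _), if_pos (Nat.zero_le _)]
  have h1 : 2 * (i+1) - 0 = 2*i + 1 + 1 := by omega
  have h2 : 2 * i - 0 = 2*i := by omega
  rw [h1, h2, Finset.prod_range_succ]
  simp only [Nat.sub_zero, Nat.factorial_succ, Nat.factorial_zero]
  push_cast
  have hi : ((Nat.factorial i : ℕ) : ℝ) ≠ 0 := Nat.cast_ne_zero.mpr (Nat.factorial_pos _).ne'
  have h2i : ((Nat.factorial (2*i) : ℕ) : ℝ) ≠ 0 := Nat.cast_ne_zero.mpr (Nat.factorial_pos _).ne'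
  field_simp
  ring

lemma cHad_rec_succ (n i k : ℕ) (hk : k ≤ i) :
    cHad n (i+1) (k+1) = ((n:ℝ)*((n:ℝ)+1) -
        ((n:ℝ)-2*i+(k+1))*(((n:ℝ)-2*i+(k+1))-1)) * cHad n i (k+1)
      - 2*(((n:ℝ)-2*i+(k+1))-1) * cHad n i k := by
  obtain ⟨m, rfl⟩ : ∃ m, i = k + m := ⟨i - k, by omega⟩
  cases m with
  | zero =>
    rw [cHad_of_gt n (show k + 0 < k + 1 by omega)]
    unfold cHad
    rw [if_pos (by omega), if_pos (by omega)]
    have h1 : 2 * (k+0+1) - (k+1) = k + 1 := by omega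
    have h2 : (k+0+1) - (k+1) = 0 := by omega
    have h3 : 2 * (k+0) - k = k := by omega
    have h4 : (k+0) - k = 0 := by omega
    rw [h1, h2, h3, h4]
    simp only [Nat.add_zero, Nat.factorial_zero, Finset.prod_range_succ]
    have hk1 : ((Nat.factorial (k+1) : ℕ) : ℝ) ≠ 0 := Nat.cast_ne_zero.mpr (Nat.factorial_pos _).ne'
    push_cast
    field_simp
    ring
  | succ s =>
    unfold cHad
    rw [if_pos (by omega), if_pos (by omega), if_pos (by omega)]
    have e1 : 2 * (k+(s+1)+1) - (k+1) = (k + 2*s + 2) + 1 := by omega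
    have e2 : (k+(s+1)+1) - (k+1) = s + 1 := by omega
    have e3 : 2 * (k+(s+1)) - (k+1) = k + 2*s + 1 := by omega
    have e4 : (k+(s+1)) - (k+1) = s := by omega
    have e5 : 2 * (k+(s+1)) - k = (k + 2*s + 1) + 1 := by omega
    have e6 : (k+(s+1)) - k = s + 1 := by omega
    rw [e1, e2, e3, e4, e5, e6, Finset.prod_range_succ]
    have f1 : Nat.factorial ((k + 2*s + 2) + 1) = ((k+2*s+3) * (k+2*s+2)) * Nat.factorial (k+2*s+1) := by
      rw [Nat.factorial_succ, Nat.factorial_succ]; ring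
    have f2 : Nat.factorial ((k + 2*s + 1) + 1) = (k+2*s+2) * Nat.factorial (k+2*s+1) := Nat.factorial_succ _
    have f3 : Nat.factorial (s+1) = (s+1) * Nat.factorial s := Nat.factorial_succ _
    have f4 : Nat.factorial (k+1) = (k+1) * Nat.factorial k := Nat.factorial_succ _
    rw [f1, f2, f3, f4]
    have hs : ((Nat.factorial s : ℕ) : ℝ) ≠ 0 := Nat.cast_ne_zero.mpr (Nat.factorial_pos _).ne'
    have hkf : ((Nat.factorial k : ℕ) : ℝ) ≠ 0 := Nat.cast_ne_zero.mpr (Nat.factorial_pos _).ne'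
    have hk21 : ((Nat.factorial (k+2*s+1) : ℕ) : ℝ) ≠ 0 := Nat.cast_ne_zero.mpr (Nat.factorial_pos _).ne'
    push_cast
    field_simp
    ring

def eHad (n i k : ℕ) : ℤ := (n : ℤ) - 2*i + k

noncomputable def Qsum (c : ℕ → ℝ) (e : ℕ → ℤ) (r : ℕ) (f : ℝ → ℝ) (x : ℝ) : ℝ :=
  ∑ k ∈ Finset.range r, c k * (x ^ (e k) * deriv^[k] f x)

lemma iter_contDiffOn {U : Set ℝ} (hU : IsOpen U) {f : ℝ → ℝ}
    (hf : ContDiffOn ℝ (⊤ : ℕ∞) f U) : ∀ k, ContDiffOn ℝ (⊤ : ℕ∞) (deriv^[k] f) U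
  | 0 => hf
  | (k+1) => by
      rw [Function.iterate_succ_apply']
      exact (iter_contDiffOn hU hf k).deriv_of_isOpen hU (by simp)

lemma iter_hasDerivAt {U : Set ℝ} (hU : IsOpen U) {f : ℝ → ℝ}
    (hf : ContDiffOn ℝ (⊤ : ℕ∞) f U) (k : ℕ) {x : ℝ} (hx : x ∈ U) :
    HasDerivAt (deriv^[k] f) (deriv^[k] (deriv f) x) x := by
  have h := (((iter_contDiffOn hU hf k).differentiableOn (by simp)).differentiableAt
    (hU.mem_nhds hx)).hasDerivAt
  have h1 : deriv (deriv^[k] f) = deriv^[k] (deriv f) :=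
    (Function.iterate_succ_apply' deriv k f).symm.trans (Function.iterate_succ_apply deriv k f)
  rwa [h1] at h

lemma hasDerivAt_Qsum {U : Set ℝ} (hU : IsOpen U) (hU0 : ∀ x ∈ U, x ≠ 0)
    {f : ℝ → ℝ} (hf : ContDiffOn ℝ (⊤ : ℕ∞) f U) (c : ℕ → ℝ) (e : ℕ → ℤ) (r : ℕ)
    {x : ℝ} (hx : x ∈ U) :
    HasDerivAt (Qsum c e r f)
      (Qsum (fun k => c k * (e k : ℝ)) (fun k => e k - 1) r f x
        + Qsum c e r (deriv f) x) x := by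
  have hx0 : x ≠ 0 := hU0 x hx
  have h : ∀ k ∈ Finset.range r,
      HasDerivAt (fun y => c k * (y ^ (e k) * deriv^[k] f y))
        (c k * (((e k : ℝ) * x ^ (e k - 1)) * deriv^[k] f x
          + x ^ (e k) * deriv^[k] (deriv f) x)) x := by
    intro k _
    exact ((hasDerivAt_zpow (e k) x (Or.inl hx0)).mul
      (iter_hasDerivAt hU hf k hx)).const_mul (c k)
  have hsum := HasDerivAt.fun_sum h
  refine hsum.congr_deriv ?_
  unfold Qsum
  rw [← Finset.sum_add_distrib]
  exact Finset.sum_congr rfl (fun k _ => by ring)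

noncomputable def Pterm (n i : ℕ) (f : ℝ → ℝ) (x : ℝ) (k : ℕ) : ℝ :=
  ((n:ℝ) * ((n:ℝ) + 1) - (eHad n i k : ℝ) * ((eHad n i k : ℝ) - 1)) * cHad n i k
    * (x ^ (eHad n i k - 2) * deriv^[k] f x)

noncomputable def Qterm (n i : ℕ) (f : ℝ → ℝ) (x : ℝ) (k : ℕ) : ℝ :=
  (-2 * (eHad n i k : ℝ)) * cHad n i k * (x ^ (eHad n i k - 1) * deriv^[k+1] f x)

lemma g_succ (n i k : ℕ) (f : ℝ → ℝ) (x : ℝ) (hk : k ≤ i) :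
    cHad n (i+1) (k+1) * (x ^ eHad n (i+1) (k+1) * deriv^[k+1] f x)
      = Pterm n i f x (k+1) + Qterm n i f x k := by
  have hE : eHad n (i+1) (k+1) = eHad n i (k+1) - 2 := by unfold eHad; push_cast; ring
  have hE' : eHad n i (k+1) - 2 = eHad n i k - 1 := by unfold eHad; push_cast; ring
  have c1 : ((eHad n i (k+1) : ℤ) : ℝ) = (n:ℝ) - 2*i + (k+1) := by unfold eHad; push_cast; ring
  have c2 : ((eHad n i k : ℤ) : ℝ) = ((n:ℝ) - 2*i + (k+1)) - 1 := by unfold eHad; push_cast; ring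
  unfold Pterm Qterm
  rw [hE, hE', cHad_rec_succ n i k hk, c1, c2]
  ring

lemma g_zero (n i : ℕ) (f : ℝ → ℝ) (x : ℝ) :
    cHad n (i+1) 0 * (x ^ eHad n (i+1) 0 * deriv^[0] f x) = Pterm n i f x 0 := by
  have hE : eHad n (i+1) 0 = eHad n i 0 - 2 := by unfold eHad; push_cast; ring
  have c1 : ((eHad n i 0 : ℤ) : ℝ) = (n:ℝ) - 2*i := by unfold eHad; push_cast; ring
  unfold Pterm
  rw [hE, cHad_rec_zero n i, c1]

lemma THad_eq (n : ℕ) {U : Set ℝ} (hU : IsOpen U) (hU0 : ∀ x ∈ U, x ≠ 0) :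
    ∀ (i : ℕ) (f : ℝ → ℝ), ContDiffOn ℝ (⊤ : ℕ∞) f U → ∀ x ∈ U,
      THad n i f x = Qsum (cHad n i) (eHad n i) (i+1) f x := by
  intro i
  induction i with
  | zero =>
    intro f hf x hx
    simp [THad, Qsum, cHad_zero, eHad, zpow_natCast]
  | succ i ih =>
    intro f hf x hx
    have hx0 : x ≠ 0 := hU0 x hx
    have hf1 : ContDiffOn ℝ (⊤ : ℕ∞) (deriv f) U := iter_contDiffOn hU hf 1
    have hf2 : ContDiffOn ℝ (⊤ : ℕ∞) (fun y => deriv (deriv f) y) U := iter_contDiffOn hU hf 2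
    have hS : ∀ y ∈ U, THad n i f y = Qsum (cHad n i) (eHad n i) (i+1) f y := ih f hf
    set C1 : ℝ → ℝ := fun y =>
      Qsum (fun k => cHad n i k * (eHad n i k : ℝ)) (fun k => eHad n i k - 1) (i+1) f y
        + Qsum (cHad n i) (eHad n i) (i+1) (deriv f) y with hC1def
    have hDS : ∀ y ∈ U, deriv (Qsum (cHad n i) (eHad n i) (i+1) f) y = C1 y := fun y hy =>
      (hasDerivAt_Qsum hU hU0 hf (cHad n i) (eHad n i) (i+1) hy).deriv
    have hEq : THad n i f =ᶠ[nhds x] Qsum (cHad n i) (eHad n i) (i+1) f :=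
      eventuallyEq_of_mem (hU.mem_nhds hx) hS
    have hEq3 : deriv (Qsum (cHad n i) (eHad n i) (i+1) f) =ᶠ[nhds x] C1 :=
      eventuallyEq_of_mem (hU.mem_nhds hx) hDS
    have hC1 : HasDerivAt C1
        ((Qsum (fun k => (cHad n i k * (eHad n i k : ℝ)) * ((eHad n i k - 1 : ℤ) : ℝ))
            (fun k => eHad n i k - 1 - 1) (i+1) f x
          + Qsum (fun k => cHad n i k * (eHad n i k : ℝ)) (fun k => eHad n i k - 1) (i+1) (deriv f) x)
        + (Qsum (fun k => cHad n i k * (eHad n i k : ℝ)) (fun k => eHad n i k - 1) (i+1) (deriv f) x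
          + Qsum (cHad n i) (eHad n i) (i+1) (deriv (deriv f)) x)) x :=
      (hasDerivAt_Qsum hU hU0 hf (fun k => cHad n i k * (eHad n i k : ℝ))
          (fun k => eHad n i k - 1) (i+1) hx).add
        (hasDerivAt_Qsum hU hU0 hf1 (cHad n i) (eHad n i) (i+1) hx)
    have hdd : deriv (deriv (THad n i f)) x = deriv C1 x := (hEq.deriv.trans hEq3).deriv_eq
    rw [hC1.deriv] at hdd
    have hA : THad n i (fun y => deriv (deriv f) y) x
        = Qsum (cHad n i) (eHad n i) (i+1) (fun y => deriv (deriv f) y) x := ih _ hf2 x hx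
    have hTi : THad n i f x = Qsum (cHad n i) (eHad n i) (i+1) f x := hS x hx
    show THad n i (fun y => deriv (deriv f) y) x - Hop n (THad n i f) x = _
    rw [hA, Hop, hdd, hTi]
    have hD1 : ∀ k : ℕ, deriv^[k] (deriv f) = deriv^[k+1] f := fun k =>
      (Function.iterate_succ_apply deriv k f).symm
    have hD2 : ∀ k : ℕ, deriv^[k] (deriv (deriv f)) = deriv^[k+2] f := fun k => by
      rw [← Function.iterate_succ_apply deriv, ← Function.iterate_succ_apply deriv]
    simp only [Qsum, hD1, hD2]
    have hdiv : (↑n * (↑n + 1) * ∑ k ∈ Finset.range (i + 1),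
          cHad n i k * (x ^ eHad n i k * deriv^[k] f x)) / x ^ 2
        = ∑ k ∈ Finset.range (i+1),
            (↑n * (↑n + 1)) * (cHad n i k * (x ^ (eHad n i k - 2) * deriv^[k] f x)) := by
      rw [Finset.mul_sum, Finset.sum_div]
      refine Finset.sum_congr rfl fun k _ => ?_
      have h2 : (x:ℝ) ^ (eHad n i k) = x ^ (eHad n i k - 2) * x ^ (2:ℕ) := by
        rw [← zpow_natCast x 2, ← zpow_add₀ hx0]; norm_num
      rw [h2]
      field_simp
    rw [hdiv]
    rw [Finset.sum_range_succ'
      (fun k => cHad n (i+1) k * (x ^ eHad n (i+1) k * deriv^[k] f x)) (i+1)]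
    have hg : ∑ k ∈ Finset.range (i+1),
          cHad n (i+1) (k+1) * (x ^ eHad n (i+1) (k+1) * deriv^[k+1] f x)
        = ∑ k ∈ Finset.range (i+1), (Pterm n i f x (k+1) + Qterm n i f x k) :=
      Finset.sum_congr rfl fun k hk =>
        g_succ n i k f x (Nat.lt_succ_iff.mp (Finset.mem_range.mp hk))
    rw [hg, g_zero n i f x, Finset.sum_add_distrib]
    have hshift : ∑ k ∈ Finset.range (i+1), Pterm n i f x (k+1)
        = ∑ k ∈ Finset.range (i+1), Pterm n i f x k - Pterm n i f x 0 := by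
      have h1 := Finset.sum_range_succ' (Pterm n i f x) (i+1)
      have h2 := Finset.sum_range_succ (Pterm n i f x) (i+1)
      have h3 : Pterm n i f x (i+1) = 0 := by
        unfold Pterm; rw [cHad_of_gt n (Nat.lt_succ_self i)]; ring
      rw [h3] at h2
      linarith [h1, h2]
    have hP : ∑ k ∈ Finset.range (i+1), Pterm n i f x k
        = ∑ k ∈ Finset.range (i+1),
            (↑n * (↑n + 1)) * (cHad n i k * (x ^ (eHad n i k - 2) * deriv^[k] f x))
          - ∑ k ∈ Finset.range (i+1),
            cHad n i k * ((eHad n i k : ℤ) : ℝ) * ((eHad n i k - 1 : ℤ) : ℝ)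
              * (x ^ (eHad n i k - 1 - 1) * deriv^[k] f x) := by
      rw [← Finset.sum_sub_distrib]
      refine Finset.sum_congr rfl fun k _ => ?_
      have hE2 : eHad n i k - 1 - 1 = eHad n i k - 2 := by ring
      unfold Pterm
      rw [hE2]
      push_cast
      ring
    have hQ : ∑ k ∈ Finset.range (i+1), Qterm n i f x k
        = -2 * ∑ k ∈ Finset.range (i+1),
            cHad n i k * ((eHad n i k : ℤ) : ℝ)
              * (x ^ (eHad n i k - 1) * deriv^[k+1] f x) := by
      rw [Finset.mul_sum]
      refine Finset.sum_congr rfl fun k _ => ?_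
      unfold Qterm
      ring
    rw [hshift, hP, hQ]
    ring

/-- The Hadamard recursion for `H = d²/dx² − n(n+1)/x²` with `𝒯₀ = xⁿ·`
truncates at step `n+1`: `𝒯_{n+1} f = 0` on `U` for every `f` smooth on the
open set `U ⊆ ℝ \ {0}`. In particular `H ∘ 𝒯ₙ = 𝒯ₙ ∘ Δ`, so `𝒯ₙ` intertwines
`Δ f = f''` with `H`. -/
theorem hadamard_truncation (n : ℕ) (hn : 1 ≤ n)
    (U : Set ℝ) (hU : IsOpen U) (hU0 : ∀ x ∈ U, x ≠ 0)
    (f : ℝ → ℝ) (hf : ContDiffOn ℝ (⊤ : ℕ∞) f U) :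
    ∀ x ∈ U, THad n (n + 1) f x = 0 := by
  intro x hx
  rw [THad_eq n hU hU0 (n+1) f hf x hx]
  unfold Qsum
  simp [cHad_truncate]
end
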